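/- arXiv:2509.14158 — 2 statements merged into one kernel-verified Lean document; each statement's English description precedes it below -/
import Mathlib

section
/- Let k ∈ L¹(ℝᵈ) be even, strictly positive almost everywhere, with ∫ k = 1, let K(x) = ∫_{ℝᵈ} k(ω) e^{2πi⟨x,ω⟩} dω, and let H be the associated RKHS with norm ‖f‖²_H = ∫ |g|²/k where f is the inverse Fourier transform of g. Let (X, Y) be a random pair in ℝᵈ × ℝ with E[Y²] < ∞, let (X′,Y′) be an independent copy, and for β ∈ ℝᵈ, λ > 0 set 𝒥(β, λ) := inf_{f ∈ H} ( E[(Y − f(β ∘ X))²] + λ‖f‖²_H ), where β ∘ x is the coordinatewise product. Then for every β ∈ ℝᵈ and λ > 0, 𝒥(β, λ) ≥ E[Y²] − (1/λ) E[Y Y′ K(β ∘ (X − X′))]. -/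
/-!
Write `e(x, ω) = exp(2πi⟨x, ω⟩)`, `Z = β ∘ X` and `φ(ω) = E[Y e(Z, ω)]`. For `f = f_g`,
dropping `E[f(Z)²] ≥ 0` gives `E[(Y - f(Z))²] ≥ E[Y²] - 2 E[Y f(Z)]`, and by Fubini
`E[Y f(Z)] = Re ∫ g φ`. Pointwise AM-GM, `2|g||φ| ≤ λ|g|²/k + k|φ|²/λ`, bounds the cross term
by `λ‖f‖²_H + (1/λ) ∫ k|φ|²`, and expanding `|φ|² = φ conj φ` and applying Fubini once more
turns `∫ k|φ|²` into `E[Y Y' K(Z - Z')]`.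
-/

open MeasureTheory Real

/-- The squared error plus ridge penalty objective of compositional kernel ridge
regression, infimized over the RKHS `H` associated to the spectral density `k`:
`𝒥(β, λ) = inf_{f ∈ H} E[(Y − f(β ∘ X))²] + λ‖f‖²_H`, where members of `H` are
parametrized by their Fourier transforms `g` (conjugate-symmetric, integrable,
with `∫ ‖g‖²/k < ∞`), `f_g(x) = ∫ g(ω) e^{2πi⟨x,ω⟩} dω` and `‖f_g‖²_H = ∫ ‖g‖²/k`. -/
noncomputable def Jobj {d : ℕ} {Ω : Type} [MeasureSpace Ω]
    (k : (Fin d → ℝ) → ℝ) (X : Ω → Fin d → ℝ) (Y : Ω → ℝ)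
    (β : Fin d → ℝ) (lam : ℝ) : ℝ :=
  sInf {r : ℝ | ∃ g : (Fin d → ℝ) → ℂ,
    Integrable g volume ∧
    (∀ ω, g (-ω) = starRingEnd ℂ (g ω)) ∧
    Integrable (fun ω : Fin d → ℝ => ‖g ω‖ ^ 2 / k ω) volume ∧
    r = (∫ p, (Y p - (∫ ω : Fin d → ℝ, g ω *
            Complex.exp (2 * π * Complex.I *
              ((∑ j, (β j * X p j) * ω j : ℝ) : ℂ))).re) ^ 2 ∂volume)
        + lam * ∫ ω : Fin d → ℝ, ‖g ω‖ ^ 2 / k ω}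

open ComplexConjugate

noncomputable def fourierKernel {d : ℕ} (x ω : Fin d → ℝ) : ℂ :=
  Complex.exp (2 * π * Complex.I * ((∑ j, x j * ω j : ℝ) : ℂ))

section FourierKernel

variable {d : ℕ}

@[simp]
lemma norm_fourierKernel (x ω : Fin d → ℝ) : ‖fourierKernel x ω‖ = 1 := by
  rw [fourierKernel, Complex.norm_exp]
  simp [Complex.mul_re]

lemma fourierKernel_comm (x ω : Fin d → ℝ) : fourierKernel x ω = fourierKernel ω x := by
  simp only [fourierKernel, mul_comm (x _)]

lemma fourierKernel_sub (x y ω : Fin d → ℝ) :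
    fourierKernel (x - y) ω = fourierKernel x ω * conj (fourierKernel y ω) := by
  simp only [fourierKernel, ← Complex.exp_conj, ← Complex.exp_add, Pi.sub_apply, sub_mul,
    Finset.sum_sub_distrib, map_mul, Complex.conj_ofReal, Complex.conj_I, map_ofNat]
  push_cast
  ring_nf

lemma continuous_fourierKernel :
    Continuous fun q : (Fin d → ℝ) × (Fin d → ℝ) => fourierKernel q.1 q.2 := by
  unfold fourierKernel
  fun_prop

variable {α : Type*} [MeasurableSpace α] {μ : Measure α} {ν : Measure (Fin d → ℝ)}

lemma AEMeasurable.aestronglyMeasurable_fourierKernel {Z W : α → Fin d → ℝ}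
    (hZ : AEMeasurable Z μ) (hW : AEMeasurable W μ) :
    AEStronglyMeasurable (fun t => fourierKernel (Z t) (W t)) μ :=
  continuous_fourierKernel.comp_aestronglyMeasurable (f := fun t => (Z t, W t))
    (hZ.prodMk hW).aestronglyMeasurable

lemma continuous_integral_mul_fourierKernel {a : α → ℂ} {Z : α → Fin d → ℝ}
    (ha : Integrable a μ) (hZ : AEMeasurable Z μ) :
    Continuous fun ω => ∫ t, a t * fourierKernel (Z t) ω ∂μ := by
  have hbound : ∀ ω t, ‖a t * fourierKernel (Z t) ω‖ ≤ ‖a t‖ := fun ω t => by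
    rw [norm_mul, norm_fourierKernel, mul_one]
  refine continuous_of_dominated (fun ω => ?_) (fun ω => .of_forall (hbound ω)) ha.norm
    (.of_forall fun t => ?_)
  · exact ha.aestronglyMeasurable.mul (hZ.aestronglyMeasurable_fourierKernel aemeasurable_const)
  · exact continuous_const.mul
      (continuous_fourierKernel.comp (f := fun ω => (Z t, ω)) (Continuous.prodMk_right (Z t)))

lemma integrable_mul_mul_fourierKernel [SFinite μ] [SFinite ν] {a : α → ℂ}
    {b : (Fin d → ℝ) → ℂ} {Z : α → Fin d → ℝ}
    (ha : Integrable a μ) (hb : Integrable b ν) (hZ : AEMeasurable Z μ) :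
    Integrable (fun z : α × (Fin d → ℝ) => a z.1 * b z.2 * fourierKernel (Z z.1) z.2)
      (μ.prod ν) := by
  refine (ha.mul_prod hb).mul_bdd (c := 1) ?_ (.of_forall fun z => (norm_fourierKernel _ _).le)
  exact hZ.comp_fst.aestronglyMeasurable_fourierKernel measurable_snd.aemeasurable

end FourierKernel

section WeightedCharFun

variable {d : ℕ} {Ω : Type*} [MeasurableSpace Ω]

noncomputable def fourierInv (g : (Fin d → ℝ) → ℂ) (x : Fin d → ℝ) : ℂ :=
  ∫ ω, g ω * fourierKernel x ω

noncomputable def weightedCharFun (μ : Measure Ω) (Y : Ω → ℝ) (Z : Ω → Fin d → ℝ)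
    (ω : Fin d → ℝ) : ℂ :=
  ∫ p, (Y p : ℂ) * fourierKernel (Z p) ω ∂μ

lemma norm_fourierInv_le (g : (Fin d → ℝ) → ℂ) (x : Fin d → ℝ) :
    ‖fourierInv g x‖ ≤ ∫ ω, ‖g ω‖ :=
  (norm_integral_le_integral_norm _).trans_eq <| by
    simp only [norm_mul, norm_fourierKernel, mul_one]

lemma norm_weightedCharFun_le (μ : Measure Ω) (Y : Ω → ℝ) (Z : Ω → Fin d → ℝ)
    (ω : Fin d → ℝ) : ‖weightedCharFun μ Y Z ω‖ ≤ ∫ p, |Y p| ∂μ :=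
  (norm_integral_le_integral_norm _).trans_eq <| by
    simp only [norm_mul, norm_fourierKernel, mul_one, Complex.norm_real, Real.norm_eq_abs]

lemma continuous_fourierInv {g : (Fin d → ℝ) → ℂ} (hg : Integrable g) :
    Continuous (fourierInv g) := by
  have h : fourierInv g = fun x => ∫ ω, g ω * fourierKernel (id ω) x :=
    funext fun x =>
      integral_congr_ae (.of_forall fun ω => congrArg (g ω * ·) (fourierKernel_comm x ω))
  rw [h]
  exact continuous_integral_mul_fourierKernel hg aemeasurable_id

variable {μ : Measure Ω} {Y : Ω → ℝ} {Z : Ω → Fin d → ℝ}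

lemma continuous_weightedCharFun (hY : Integrable Y μ) (hZ : AEMeasurable Z μ) :
    Continuous (weightedCharFun μ Y Z) :=
  continuous_integral_mul_fourierKernel hY.ofReal hZ

lemma sq_norm_weightedCharFun [SFinite μ] (ω : Fin d → ℝ) :
    (‖weightedCharFun μ Y Z ω‖ : ℂ) ^ 2 =
      ∫ q, ((Y q.1 * Y q.2 : ℝ) : ℂ) * fourierKernel (Z q.1 - Z q.2) ω ∂μ.prod μ := by
  rw [← Complex.mul_conj', weightedCharFun, ← integral_conj, ← integral_prod_mul]
  refine integral_congr_ae (.of_forall fun q => ?_)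
  simp only [map_mul, Complex.conj_ofReal, fourierKernel_sub]
  push_cast
  ring

lemma integrable_mul_sq_norm_weightedCharFun {k : (Fin d → ℝ) → ℝ} (hk : Integrable k)
    (hY : Integrable Y μ) (hZ : AEMeasurable Z μ) :
    Integrable fun ω => k ω * ‖weightedCharFun μ Y Z ω‖ ^ 2 :=
  hk.mul_bdd ((continuous_weightedCharFun hY hZ).norm.pow 2).aestronglyMeasurable
    (.of_forall fun ω => by
      rw [norm_pow, norm_norm]
      exact pow_le_pow_left₀ (norm_nonneg _) (norm_weightedCharFun_le μ Y Z ω) 2)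

lemma integral_mul_sq_norm_weightedCharFun [SFinite μ] {k K : (Fin d → ℝ) → ℝ}
    (hk : Integrable k) (hK : ∀ x, (K x : ℂ) = ∫ ω, (k ω : ℂ) * fourierKernel x ω)
    (hY : Integrable Y μ) (hZ : AEMeasurable Z μ) :
    ∫ ω, k ω * ‖weightedCharFun μ Y Z ω‖ ^ 2 =
      ∫ q, Y q.1 * Y q.2 * K (Z q.1 - Z q.2) ∂μ.prod μ := by
  have hint := integrable_mul_mul_fourierKernel (hY.mul_prod hY).ofReal hk.ofReal
    (hZ.comp_fst.sub hZ.comp_snd)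
  apply Complex.ofReal_injective
  calc ((∫ ω, k ω * ‖weightedCharFun μ Y Z ω‖ ^ 2 : ℝ) : ℂ)
      = ∫ ω, ∫ q, ((Y q.1 * Y q.2 : ℝ) : ℂ) * k ω * fourierKernel (Z q.1 - Z q.2) ω
          ∂μ.prod μ := by
        rw [← integral_complex_ofReal]
        refine integral_congr_ae (.of_forall fun ω => ?_)
        simp only [Complex.ofReal_mul, Complex.ofReal_pow, sq_norm_weightedCharFun,
          ← integral_const_mul]
        exact integral_congr_ae (.of_forall fun q => by ring)
    _ = ∫ q, (∫ ω, ((Y q.1 * Y q.2 : ℝ) : ℂ) * k ω * fourierKernel (Z q.1 - Z q.2) ω)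
          ∂μ.prod μ :=
        (integral_integral_swap hint).symm
    _ = _ := by
        rw [← integral_complex_ofReal]
        refine integral_congr_ae (.of_forall fun q => ?_)
        simp only [mul_assoc, integral_const_mul, ← hK]
        push_cast
        ring

lemma integral_mul_fourierInv [SFinite μ] {g : (Fin d → ℝ) → ℂ} (hg : Integrable g)
    (hY : Integrable Y μ) (hZ : AEMeasurable Z μ) :
    ∫ p, (Y p : ℂ) * fourierInv g (Z p) ∂μ = ∫ ω, g ω * weightedCharFun μ Y Z ω := by
  have hint := integrable_mul_mul_fourierKernel hY.ofReal hg hZ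
  calc ∫ p, (Y p : ℂ) * fourierInv g (Z p) ∂μ
      = ∫ p, (∫ ω, (Y p : ℂ) * g ω * fourierKernel (Z p) ω) ∂μ := by
        simp only [fourierInv, mul_assoc, integral_const_mul]
    _ = ∫ ω, ∫ p, (Y p : ℂ) * g ω * fourierKernel (Z p) ω ∂μ := integral_integral_swap hint
    _ = ∫ ω, g ω * weightedCharFun μ Y Z ω := by
        simp only [weightedCharFun, ← integral_const_mul]
        exact integral_congr_ae (.of_forall fun ω =>
          integral_congr_ae (.of_forall fun p => by ring))

end WeightedCharFun

lemma two_mul_mul_le_add_div {a b c t : ℝ} (hc : 0 < c) (ht : 0 < t) :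
    2 * (a * b) ≤ t * (a ^ 2 / c) + 1 / t * (c * b ^ 2) := by
  have h : t * (a ^ 2 / c) + 1 / t * (c * b ^ 2) - 2 * (a * b) =
      (t * a - c * b) ^ 2 / (t * c) := by
    field_simp
    ring
  linarith [div_nonneg (sq_nonneg (t * a - c * b)) (mul_pos ht hc).le]

section RidgeBound

variable {d : ℕ} {Ω : Type*} [MeasurableSpace Ω] {μ : Measure Ω} [SFinite μ] {Y : Ω → ℝ}
  {Z : Ω → Fin d → ℝ} {k : (Fin d → ℝ) → ℝ} {g : (Fin d → ℝ) → ℂ} {lam : ℝ}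

lemma two_mul_integral_mul_re_fourierInv_le (hk : Integrable k) (hk_pos : ∀ᵐ ω, 0 < k ω)
    (hlam : 0 < lam) (hg : Integrable g) (hg2 : Integrable fun ω => ‖g ω‖ ^ 2 / k ω)
    (hY : Integrable Y μ) (hZ : AEMeasurable Z μ) :
    2 * ∫ p, Y p * (fourierInv g (Z p)).re ∂μ ≤
      lam * (∫ ω, ‖g ω‖ ^ 2 / k ω) + 1 / lam * ∫ ω, k ω * ‖weightedCharFun μ Y Z ω‖ ^ 2 := by
  have hφ := integrable_mul_sq_norm_weightedCharFun hk hY hZ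
  have hgφ : Integrable fun ω => ‖g ω‖ * ‖weightedCharFun μ Y Z ω‖ :=
    hg.norm.mul_bdd (continuous_weightedCharFun hY hZ).norm.aestronglyMeasurable
      (.of_forall fun ω => (norm_norm _).trans_le (norm_weightedCharFun_le μ Y Z ω))
  have hYf : Integrable (fun p => (Y p : ℂ) * fourierInv g (Z p)) μ :=
    hY.ofReal.mul_bdd ((continuous_fourierInv hg).comp_aestronglyMeasurable
      hZ.aestronglyMeasurable) (.of_forall fun p => norm_fourierInv_le g (Z p))
  calc 2 * ∫ p, Y p * (fourierInv g (Z p)).re ∂μ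
      = 2 * (∫ ω, g ω * weightedCharFun μ Y Z ω).re := by
        have hre := integral_re hYf
        simp only [RCLike.re_to_complex, Complex.re_ofReal_mul] at hre
        rw [← integral_mul_fourierInv hg hY hZ, ← hre]
    _ ≤ 2 * ∫ ω, ‖g ω‖ * ‖weightedCharFun μ Y Z ω‖ := by
        gcongr
        exact (Complex.re_le_norm _).trans
          ((norm_integral_le_integral_norm _).trans_eq (by simp only [norm_mul]))
    _ = ∫ ω, 2 * (‖g ω‖ * ‖weightedCharFun μ Y Z ω‖) := (integral_const_mul _ _).symm
    _ ≤ ∫ ω, lam * (‖g ω‖ ^ 2 / k ω) + 1 / lam * (k ω * ‖weightedCharFun μ Y Z ω‖ ^ 2) :=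
        integral_mono_ae (hgφ.const_mul 2) ((hg2.const_mul lam).add (hφ.const_mul _))
          (hk_pos.mono fun ω hω => two_mul_mul_le_add_div hω hlam)
    _ = _ := by
        rw [integral_add (hg2.const_mul lam) (hφ.const_mul _), integral_const_mul,
          integral_const_mul]

lemma integral_sq_sub_re_fourierInv_add_ge [IsFiniteMeasure μ] (hk : Integrable k)
    (hk_pos : ∀ᵐ ω, 0 < k ω) (hlam : 0 < lam) (hg : Integrable g)
    (hg2 : Integrable fun ω => ‖g ω‖ ^ 2 / k ω) (hY : MemLp Y 2 μ) (hZ : AEMeasurable Z μ) :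
    ∫ p, Y p ^ 2 ∂μ - 1 / lam * (∫ ω, k ω * ‖weightedCharFun μ Y Z ω‖ ^ 2) ≤
      ∫ p, (Y p - (fourierInv g (Z p)).re) ^ 2 ∂μ + lam * ∫ ω, ‖g ω‖ ^ 2 / k ω := by
  have hf : MemLp (fun p => (fourierInv g (Z p)).re) 2 μ :=
    .of_bound ((Complex.continuous_re.comp (continuous_fourierInv hg)).comp_aestronglyMeasurable
      hZ.aestronglyMeasurable) (∫ ω, ‖g ω‖)
      (.of_forall fun p => (Complex.abs_re_le_norm _).trans (norm_fourierInv_le g (Z p)))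
  have hYf : Integrable (fun p => 2 * (Y p * (fourierInv g (Z p)).re)) μ :=
    (hY.integrable_mul hf).const_mul 2
  have hcross := two_mul_integral_mul_re_fourierInv_le hk hk_pos hlam hg hg2
    (hY.integrable one_le_two) hZ
  have hsq : ∫ p, Y p ^ 2 ∂μ - 2 * ∫ p, Y p * (fourierInv g (Z p)).re ∂μ ≤
      ∫ p, (Y p - (fourierInv g (Z p)).re) ^ 2 ∂μ := by
    rw [← integral_const_mul, ← integral_sub hY.integrable_sq hYf]
    exact integral_mono (hY.integrable_sq.sub hYf) (hY.sub hf).integrable_sq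
      fun p => by nlinarith [sq_nonneg (fourierInv g (Z p)).re]
  linarith

end RidgeBound

theorem stmt6_general {d : ℕ}
    (k : (Fin d → ℝ) → ℝ) (hk_int : Integrable k)
    (hk_pos : ∀ᵐ ω ∂(volume : Measure (Fin d → ℝ)), 0 < k ω)
    (K : (Fin d → ℝ) → ℝ)
    (hK : ∀ x : Fin d → ℝ, (K x : ℂ) = ∫ ω : Fin d → ℝ,
      (k ω : ℂ) * Complex.exp (2 * π * Complex.I * ((∑ j, x j * ω j : ℝ) : ℂ)))
    {Ω : Type} [MeasureSpace Ω] [IsProbabilityMeasure (volume : Measure Ω)]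
    (X : Ω → Fin d → ℝ) (Y : Ω → ℝ) (hX : Measurable X) (hY : Measurable Y)
    (hY2 : Integrable (fun p => (Y p) ^ 2) volume)
    (β : Fin d → ℝ) (lam : ℝ) (hlam : 0 < lam) :
    Jobj k X Y β lam ≥
      (∫ p, (Y p) ^ 2 ∂volume) -
        (1 / lam) * ∫ p : Ω × Ω,
          Y p.1 * Y p.2 * K (fun j => β j * (X p.1 j - X p.2 j)) ∂(volume.prod volume) := by
  have hYL2 : MemLp Y 2 volume := (memLp_two_iff_integrable_sq hY.aestronglyMeasurable).2 hY2
  set Z : Ω → Fin d → ℝ := fun p j => β j * X p j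
  have hZ : AEMeasurable Z := by fun_prop
  have hZ_sub (p q : Ω) : Z p - Z q = fun j => β j * (X p j - X q j) := by
    funext j
    exact (mul_sub _ _ _).symm
  have hkernel :=
    integral_mul_sq_norm_weightedCharFun hk_int hK (hYL2.integrable one_le_two) hZ
  simp only [hZ_sub] at hkernel
  rw [Jobj, ge_iff_le, ← hkernel]
  refine le_csInf ⟨_, 0, integrable_zero _ _ _, by simp, by simp, rfl⟩ ?_
  rintro r ⟨g, hg, -, hg2, rfl⟩
  -- the inner integral in `Jobj` is `fourierInv g (Z p)` after unfolding
  exact integral_sq_sub_re_fourierInv_add_ge hk_int hk_pos hlam hg hg2 hYL2 hZ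

/-- lower bound on the kernel ridge regression value:
`𝒥(β, λ) ≥ E[Y²] − (1/λ) E[Y Y' K(β ∘ (X − X'))]`. -/
theorem stmt6 {d : ℕ} (hd : 1 ≤ d)
    (k : (Fin d → ℝ) → ℝ) (hk_int : Integrable k)
    (hk_even : ∀ ω, k (-ω) = k ω)
    (hk_pos : ∀ᵐ ω ∂(volume : Measure (Fin d → ℝ)), 0 < k ω)
    (hk_one : ∫ ω : Fin d → ℝ, k ω = 1)
    (K : (Fin d → ℝ) → ℝ)
    (hK : ∀ x : Fin d → ℝ, (K x : ℂ) = ∫ ω : Fin d → ℝ,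
      (k ω : ℂ) * Complex.exp (2 * π * Complex.I * ((∑ j, x j * ω j : ℝ) : ℂ)))
    {Ω : Type} [MeasureSpace Ω] [IsProbabilityMeasure (volume : Measure Ω)]
    (X : Ω → Fin d → ℝ) (Y : Ω → ℝ) (hX : Measurable X) (hY : Measurable Y)
    (hY2 : Integrable (fun p => (Y p) ^ 2) volume)
    (β : Fin d → ℝ) (lam : ℝ) (hlam : 0 < lam) :
    Jobj k X Y β lam ≥
      (∫ p, (Y p) ^ 2 ∂volume) -
        (1 / lam) * ∫ p : Ω × Ω,
          Y p.1 * Y p.2 * K (fun j => β j * (X p.1 j - X p.2 j)) ∂(volume.prod volume) :=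
  stmt6_general k hk_int hk_pos K hK X Y hX hY hY2 β lam hlam
end

section
/- Let (X, Y) be a random pair in ℝᵈ × ℝ with E[Y²] < ∞, where the law of X is absolutely continuous with respect to Lebesgue measure on ℝᵈ, and let (X′, Y′) be an independent copy. Let K : ℝᵈ → ℝ be bounded and continuous with K(z) → 0 as ‖z‖ → ∞. Then E[Y Y′ K(β ∘ (X − X′))] → 0 as ‖β‖ → ∞. -/
/-!
For almost every pair `(x, x')` all coordinates of `x - x'` are nonzero, because the law of `X`
charges no hyperplane `{x_j = c}`. For such a pair, `β ↦ β ∘ (x - x')` is a homeomorphism of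
`ℝᵈ`, so it maps the cocompact filter to itself and `K(β ∘ (x - x')) → 0`. The integrand is
dominated by `C |Y| |Y'|`, which is integrable because `Y ∈ L² ⊆ L¹`, and dominated convergence
finishes the proof.
-/

open MeasureTheory Filter Topology

instance isCountablyGenerated_cocompact_of_proper {E : Type*} [SeminormedAddCommGroup E]
    [ProperSpace E] : (cocompact E).IsCountablyGenerated := by
  rw [← Metric.cobounded_eq_cocompact, ← comap_norm_atTop]
  infer_instance

theorem ae_forall_coord_ne_of_absolutelyContinuous {ι : Type*} [Fintype ι]
    (μ ν : Measure (ι → ℝ)) [SFinite μ] [SFinite ν] (hν : ν ≪ volume) :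
    ∀ᵐ q ∂μ.prod ν, ∀ j, q.1 j ≠ q.2 j := by
  refine ae_all_iff.2 fun j => ?_
  have hS : MeasurableSet {q : (ι → ℝ) × (ι → ℝ) | q.1 j = q.2 j} :=
    measurableSet_eq_fun (by fun_prop) (by fun_prop)
  have hslice (a : ι → ℝ) : ν {b | a j = b j} = 0 := by
    refine hν ?_
    simp_rw [eq_comm (a := a j), volume_pi]
    exact Measure.pi_hyperplane (fun _ : ι => (volume : Measure ℝ)) j (a j)
  simp [ae_iff, Measure.prod_apply hS, hslice]

theorem tendsto_comp_hadamard_cocompact {ι E : Type*} [Finite ι] {l : Filter E}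
    {K : (ι → ℝ) → E} (hK : Tendsto K (cocompact _) l) {v : ι → ℝ} (hv : ∀ j, v j ≠ 0) :
    Tendsto (fun β : ι → ℝ => K (fun j => β j * v j)) (cocompact _) l :=
  hK.comp (Homeomorph.piCongrRight fun j => Homeomorph.mulRight₀ (v j) (hv j)).map_cocompact.le

theorem tendsto_integral_mul_mul_of_bounded {α ι : Type*} [MeasurableSpace α]
    {μ : Measure α} [SFinite μ] {l : Filter ι} [l.IsCountablyGenerated] {Y : α → ℝ}
    (hY : Integrable Y μ) {F : ι → α × α → ℝ} {C : ℝ}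
    (hFm : ∀ i, AEStronglyMeasurable (F i) (μ.prod μ)) (hFb : ∀ i p, |F i p| ≤ C)
    (hF : ∀ᵐ p ∂μ.prod μ, Tendsto (fun i => F i p) l (𝓝 0)) :
    Tendsto (fun i => ∫ p, Y p.1 * Y p.2 * F i p ∂μ.prod μ) l (𝓝 0) := by
  have hYY : AEStronglyMeasurable (fun p : α × α => Y p.1 * Y p.2) (μ.prod μ) :=
    (hY.mul_prod hY).aestronglyMeasurable
  have hbound (i) (p : α × α) : ‖Y p.1 * Y p.2 * F i p‖ ≤ C * (|Y p.1| * |Y p.2|) := by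
    rw [Real.norm_eq_abs, abs_mul, abs_mul, mul_comm C]
    exact mul_le_mul_of_nonneg_left (hFb i p) (by positivity)
  simpa using tendsto_integral_filter_of_dominated_convergence (f := fun _ => 0) _
    (Eventually.of_forall fun i => hYY.mul (hFm i))
    (Eventually.of_forall fun i => Eventually.of_forall (hbound i))
    ((hY.abs.mul_prod hY.abs).const_mul C)
    (hF.mono fun p hp => by simpa using hp.const_mul (Y p.1 * Y p.2))

theorem stmt7_general {d : ℕ}
    {Ω : Type} [MeasureSpace Ω] [IsProbabilityMeasure (volume : Measure Ω)]
    (X : Ω → Fin d → ℝ) (Y : Ω → ℝ) (hX : Measurable X) (hY : Measurable Y)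
    (hY2 : Integrable (fun p => (Y p) ^ 2) volume)
    (hXac : (volume : Measure Ω).map X ≪ (volume : Measure (Fin d → ℝ)))
    (K : (Fin d → ℝ) → ℝ)
    (hKcont : Continuous K)
    (hKbdd : ∃ C : ℝ, ∀ z, |K z| ≤ C)
    (hKzero : Tendsto K (cocompact (Fin d → ℝ)) (nhds 0)) :
    Tendsto (fun β : Fin d → ℝ =>
        ∫ p : Ω × Ω, Y p.1 * Y p.2 * K (fun j => β j * (X p.1 j - X p.2 j))
          ∂(volume.prod volume))
      (cocompact (Fin d → ℝ)) (nhds 0) := by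
  obtain ⟨C, hC⟩ := hKbdd
  have hYint : Integrable Y :=
    ((memLp_two_iff_integrable_sq hY.aestronglyMeasurable).2 hY2).integrable one_le_two
  have hXX : ∀ᵐ p : Ω × Ω ∂volume.prod volume, ∀ j, X p.1 j ≠ X p.2 j := by
    have hlaw := ae_forall_coord_ne_of_absolutelyContinuous (volume.map X) _ hXac
    rw [Measure.map_prod_map _ _ hX hX] at hlaw
    exact ae_of_ae_map (hX.prodMap hX).aemeasurable hlaw
  refine tendsto_integral_mul_mul_of_bounded hYint
    (fun β => (hKcont.measurable.comp (by fun_prop)).aestronglyMeasurable) (fun _ _ => hC _) ?_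
  filter_upwards [hXX] with p hp
  exact tendsto_comp_hadamard_cocompact hKzero fun j => sub_ne_zero.2 (hp j)

/-- If the law of `X` is absolutely continuous with respect to Lebesgue
measure, `K` is bounded continuous with `K(z) → 0` at infinity, and `E[Y²] < ∞`, then
`E[Y Y' K(β ∘ (X − X'))] → 0` as `‖β‖ → ∞`. -/
theorem stmt7 {d : ℕ} (hd : 1 ≤ d)
    {Ω : Type} [MeasureSpace Ω] [IsProbabilityMeasure (volume : Measure Ω)]
    (X : Ω → Fin d → ℝ) (Y : Ω → ℝ) (hX : Measurable X) (hY : Measurable Y)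
    (hY2 : Integrable (fun p => (Y p) ^ 2) volume)
    (hXac : (volume : Measure Ω).map X ≪ (volume : Measure (Fin d → ℝ)))
    (K : (Fin d → ℝ) → ℝ)
    (hKcont : Continuous K)
    (hKbdd : ∃ C : ℝ, ∀ z, |K z| ≤ C)
    (hKzero : Tendsto K (cocompact (Fin d → ℝ)) (nhds 0)) :
    Tendsto (fun β : Fin d → ℝ =>
        ∫ p : Ω × Ω, Y p.1 * Y p.2 * K (fun j => β j * (X p.1 j - X p.2 j))
          ∂(volume.prod volume))
      (cocompact (Fin d → ℝ)) (nhds 0) :=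
  stmt7_general X Y hX hY hY2 hXac K hKcont hKbdd hKzero
end
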